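/- arXiv:1103.2056 — 5 statements merged into one kernel-verified Lean document; each statement's English description precedes it below -/
import Mathlib

section
/- Let N ≥ 1, let a, b ∈ ℝ^N with a(j) ≤ b(j) for all j, and let f : ℝ^N → ℝ satisfy the Lipschitz condition with constant L > 0 on the hyperinterval [a,b]. If L̂ ≥ √2·L, then for every x ∈ [a,b] one has ½(f(a) + f(b) − L̂‖b − a‖) ≤ f(x); in particular, R(L̂) = ½(f(a) + f(b) − L̂‖b − a‖) is a lower bound for the minimum of f over [a,b]. (Theorem 1 of the paper.) -/
open RealInnerProductSpace

/-!
For `x` in the box `[a, b]` every coordinate of `x - a` and of `b - x` is nonnegative, so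
`⟪x - a, b - x⟫ ≥ 0` and Pythagoras gives `‖x - a‖² + ‖b - x‖² ≤ ‖b - a‖²`, whence
`‖x - a‖ + ‖b - x‖ ≤ √2 ‖b - a‖`. Adding the Lipschitz bounds `f a - f x ≤ L ‖x - a‖` and
`f b - f x ≤ L ‖b - x‖` then gives `f a + f b - 2 f x ≤ √2 L ‖b - a‖`.
-/

lemma EuclideanSpace.inner_sub_sub_nonneg_of_forall_mem_Icc {ι : Type*} [Fintype ι]
    {a b x : EuclideanSpace ℝ ι} (hx : ∀ j, a j ≤ x j ∧ x j ≤ b j) :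
    0 ≤ ⟪x - a, b - x⟫ := by
  rw [PiLp.inner_apply]
  refine Finset.sum_nonneg fun j _ => ?_
  simp only [PiLp.sub_apply, RCLike.inner_apply, conj_trivial]
  exact mul_nonneg (sub_nonneg.2 (hx j).2) (sub_nonneg.2 (hx j).1)

lemma norm_sub_add_norm_sub_le_sqrt_two_mul {E : Type*} [NormedAddCommGroup E]
    [InnerProductSpace ℝ E] {a b x : E} (h : 0 ≤ ⟪x - a, b - x⟫) :
    ‖x - a‖ + ‖b - x‖ ≤ Real.sqrt 2 * ‖b - a‖ := by
  have hpyth : ‖x - a‖ ^ 2 + ‖b - x‖ ^ 2 ≤ ‖b - a‖ ^ 2 := by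
    have := norm_add_sq_real (x - a) (b - x)
    rw [sub_add_sub_cancel'] at this
    linarith
  have hsq : (‖x - a‖ + ‖b - x‖) ^ 2 ≤ (Real.sqrt 2 * ‖b - a‖) ^ 2 := by
    rw [mul_pow, Real.sq_sqrt zero_le_two]
    nlinarith [sq_nonneg (‖x - a‖ - ‖b - x‖)]
  exact (pow_le_pow_iff_left₀ (by positivity) (by positivity) two_ne_zero).1 hsq

lemma half_add_sub_mul_norm_le_of_norm_add_norm_le {E : Type*} [SeminormedAddCommGroup E]
    {f : E → ℝ} {a b x : E} {L c Lhat : ℝ} (hL : 0 ≤ L)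
    (ha : |f a - f x| ≤ L * ‖a - x‖) (hb : |f b - f x| ≤ L * ‖b - x‖)
    (hsum : ‖x - a‖ + ‖b - x‖ ≤ c * ‖b - a‖) (hLhat : c * L ≤ Lhat) :
    (f a + f b - Lhat * ‖b - a‖) / 2 ≤ f x := by
  rw [norm_sub_rev] at ha
  have hfa := (abs_le.1 ha).2
  have hfb := (abs_le.1 hb).2
  have hscale : c * L * ‖b - a‖ ≤ Lhat * ‖b - a‖ := mul_le_mul_of_nonneg_right hLhat (norm_nonneg _)
  nlinarith [mul_le_mul_of_nonneg_left hsum hL, hscale]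

theorem lower_bound_sqrt_two_general (N : ℕ)
    (a b : EuclideanSpace ℝ (Fin N)) (hab : ∀ j, a j ≤ b j)
    (f : EuclideanSpace ℝ (Fin N) → ℝ) (L : ℝ) (hL : 0 < L)
    (hf : ∀ x' x'', (∀ j, a j ≤ x' j ∧ x' j ≤ b j) →
      (∀ j, a j ≤ x'' j ∧ x'' j ≤ b j) → |f x' - f x''| ≤ L * ‖x' - x''‖)
    (Lhat : ℝ) (hLhat : Real.sqrt 2 * L ≤ Lhat) :
    ∀ x, (∀ j, a j ≤ x j ∧ x j ≤ b j) →
      (f a + f b - Lhat * ‖b - a‖) / 2 ≤ f x := by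
  intro x hx
  have hfa := hf a x (fun j => ⟨le_rfl, hab j⟩) hx
  have hfb := hf b x (fun j => ⟨hab j, le_rfl⟩) hx
  exact half_add_sub_mul_norm_le_of_norm_add_norm_le hL.le hfa hfb
    (norm_sub_add_norm_sub_le_sqrt_two_mul
      (EuclideanSpace.inner_sub_sub_nonneg_of_forall_mem_Icc hx)) hLhat

/-- Theorem 1 of the paper: if `L̂ ≥ √2 · L`, then
`R(L̂) = (f a + f b - L̂‖b - a‖)/2` is a lower bound for `f` over the
hyperinterval `[a, b]`. -/
theorem lower_bound_sqrt_two (N : ℕ) (hN : 1 ≤ N)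
    (a b : EuclideanSpace ℝ (Fin N)) (hab : ∀ j, a j ≤ b j)
    (f : EuclideanSpace ℝ (Fin N) → ℝ) (L : ℝ) (hL : 0 < L)
    (hf : ∀ x' x'', (∀ j, a j ≤ x' j ∧ x' j ≤ b j) →
      (∀ j, a j ≤ x'' j ∧ x'' j ≤ b j) → |f x' - f x''| ≤ L * ‖x' - x''‖)
    (Lhat : ℝ) (hLhat : Real.sqrt 2 * L ≤ Lhat) :
    ∀ x, (∀ j, a j ≤ x j ∧ x j ≤ b j) →
      (f a + f b - Lhat * ‖b - a‖) / 2 ≤ f x :=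
  lower_bound_sqrt_two_general N a b hab f L hL hf Lhat hLhat
end

section
/- Let N ≥ 1 and let a, b ∈ ℝ^N with a(j) ≤ b(j) for all j. Then for every point x in the hyperinterval [a,b], ‖a − x‖ + ‖b − x‖ ≤ √2·‖b − a‖. (The geometric lemma from Molinaro et al. used in the proof of Theorem 1.) -/
/-!
A point `x` of the box sees the diagonal `[a, b]` at an obtuse angle: coordinatewise
`(a j - x j) * (b j - x j) ≤ 0`, so `⟪a - x, b - x⟫ ≤ 0` and Pythagoras gives
`‖a - x‖² + ‖b - x‖² ≤ ‖b - a‖²`. The claim follows from `(u + v)² ≤ 2 (u² + v²)`.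
-/

open RealInnerProductSpace

theorem add_le_sqrt_two_mul_of_sq_add_sq_le {u v w : ℝ} (hw : 0 ≤ w)
    (h : u ^ 2 + v ^ 2 ≤ w ^ 2) : u + v ≤ Real.sqrt 2 * w := by
  have hsq : (u + v) ^ 2 ≤ (Real.sqrt 2 * w) ^ 2 := by
    rw [mul_pow, Real.sq_sqrt zero_le_two]
    nlinarith [sq_nonneg (u - v)]
  exact abs_le_of_sq_le_sq' hsq (by positivity) |>.2

theorem sq_norm_sub_add_sq_norm_sub_le_of_inner_nonpos {E : Type*}
    [NormedAddCommGroup E] [InnerProductSpace ℝ E] {a b x : E}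
    (h : ⟪a - x, b - x⟫ ≤ 0) : ‖a - x‖ ^ 2 + ‖b - x‖ ^ 2 ≤ ‖b - a‖ ^ 2 := by
  have hdiag : b - a = (b - x) - (a - x) := by abel
  rw [hdiag, norm_sub_sq_real (b - x) (a - x), real_inner_comm]
  linarith

theorem EuclideanSpace.inner_sub_sub_nonpos_of_mem_box {ι : Type*} [Fintype ι]
    {a b x : EuclideanSpace ℝ ι} (hx : ∀ j, a j ≤ x j ∧ x j ≤ b j) :
    ⟪a - x, b - x⟫ ≤ 0 := by
  rw [PiLp.inner_apply]
  refine Finset.sum_nonpos fun j _ => ?_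
  simp only [PiLp.sub_apply, RCLike.inner_apply, conj_trivial]
  exact mul_nonpos_of_nonneg_of_nonpos (sub_nonneg.2 (hx j).2) (sub_nonpos.2 (hx j).1)

theorem sum_dists_le_sqrt_two_diag_general (N : ℕ)
    (a b : EuclideanSpace ℝ (Fin N)) :
    ∀ x : EuclideanSpace ℝ (Fin N), (∀ j, a j ≤ x j ∧ x j ≤ b j) →
      ‖a - x‖ + ‖b - x‖ ≤ Real.sqrt 2 * ‖b - a‖ := fun _ hx =>
  add_le_sqrt_two_mul_of_sq_add_sq_le (norm_nonneg _)
    (sq_norm_sub_add_sq_norm_sub_le_of_inner_nonpos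
      (EuclideanSpace.inner_sub_sub_nonpos_of_mem_box hx))

/-- The geometric lemma (Molinaro et al.) used in the proof of Theorem 1:
for every point `x` of the hyperinterval `[a, b]`,
`‖a - x‖ + ‖b - x‖ ≤ √2 · ‖b - a‖`. -/
theorem sum_dists_le_sqrt_two_diag (N : ℕ) (hN : 1 ≤ N)
    (a b : EuclideanSpace ℝ (Fin N)) (hab : ∀ j, a j ≤ b j) :
    ∀ x : EuclideanSpace ℝ (Fin N), (∀ j, a j ≤ x j ∧ x j ≤ b j) →
      ‖a - x‖ + ‖b - x‖ ≤ Real.sqrt 2 * ‖b - a‖ :=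
  sum_dists_le_sqrt_two_diag_general N a b
end

section
/- Let N ≥ 1, let a, b ∈ ℝ^N with a(j) ≤ b(j) for all j, and let f : ℝ^N → ℝ satisfy the Lipschitz condition with constant L > 0 on the hyperinterval [a,b]. If L̂ ≥ 2·L, then for every x ∈ [a,b] one has ½(f(a) + f(b) − L̂‖b − a‖) ≤ f(x). (Pintér's condition (12), the weaker predecessor of Theorem 1.) -/
/-! Any two points of the box `[a, b]` are at most `‖b - a‖` apart, so the Lipschitz condition
gives `f a - f x ≤ L‖b - a‖` and `f b - f x ≤ L‖b - a‖`; averaging these two bounds and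
using `2L ≤ L̂` yields the claim. -/

theorem EuclideanSpace.norm_le_norm_of_forall_abs_le {ι : Type*} [Fintype ι]
    {u v : EuclideanSpace ℝ ι} (h : ∀ j, |u j| ≤ |v j|) : ‖u‖ ≤ ‖v‖ := by
  rw [EuclideanSpace.norm_eq, EuclideanSpace.norm_eq]
  gcongr with j
  simpa only [Real.norm_eq_abs] using h j

theorem EuclideanSpace.norm_sub_le_of_mem_box {ι : Type*} [Fintype ι]
    {a b x y : EuclideanSpace ℝ ι} (hx : ∀ j, a j ≤ x j ∧ x j ≤ b j)
    (hy : ∀ j, a j ≤ y j ∧ y j ≤ b j) : ‖x - y‖ ≤ ‖b - a‖ := by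
  refine norm_le_norm_of_forall_abs_le fun j => ?_
  rw [PiLp.sub_apply, PiLp.sub_apply, abs_sub_le_iff,
    abs_of_nonneg (sub_nonneg.2 ((hx j).1.trans (hx j).2))]
  constructor <;> linarith [hx j, hy j]

theorem lower_bound_two_L_general (N : ℕ)
    (a b : EuclideanSpace ℝ (Fin N)) (hab : ∀ j, a j ≤ b j)
    (f : EuclideanSpace ℝ (Fin N) → ℝ) (L : ℝ) (hL : 0 < L)
    (hf : ∀ x' x'', (∀ j, a j ≤ x' j ∧ x' j ≤ b j) →
      (∀ j, a j ≤ x'' j ∧ x'' j ≤ b j) → |f x' - f x''| ≤ L * ‖x' - x''‖)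
    (Lhat : ℝ) (hLhat : 2 * L ≤ Lhat) :
    ∀ x, (∀ j, a j ≤ x j ∧ x j ≤ b j) →
      (f a + f b - Lhat * ‖b - a‖) / 2 ≤ f x := by
  intro x hx
  have ha : ∀ j, a j ≤ a j ∧ a j ≤ b j := fun j => ⟨le_rfl, hab j⟩
  have hb : ∀ j, a j ≤ b j ∧ b j ≤ b j := fun j => ⟨hab j, le_rfl⟩
  have hfa : f a - f x ≤ L * ‖b - a‖ := calc
    f a - f x ≤ L * ‖a - x‖ := (abs_le.1 (hf a x ha hx)).2
    _ ≤ L * ‖b - a‖ := by gcongr; exact EuclideanSpace.norm_sub_le_of_mem_box ha hx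
  have hfb : f b - f x ≤ L * ‖b - a‖ := calc
    f b - f x ≤ L * ‖b - x‖ := (abs_le.1 (hf b x hb hx)).2
    _ ≤ L * ‖b - a‖ := by gcongr; exact EuclideanSpace.norm_sub_le_of_mem_box hb hx
  calc (f a + f b - Lhat * ‖b - a‖) / 2 ≤ (f a + f b - 2 * L * ‖b - a‖) / 2 := by gcongr
    _ ≤ f x := by linarith

/-- Pintér's condition: if `L̂ ≥ 2L`, then
`(f a + f b - L̂‖b - a‖)/2` is a lower bound for `f` over the
hyperinterval `[a, b]`. -/
theorem lower_bound_two_L (N : ℕ) (hN : 1 ≤ N)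
    (a b : EuclideanSpace ℝ (Fin N)) (hab : ∀ j, a j ≤ b j)
    (f : EuclideanSpace ℝ (Fin N) → ℝ) (L : ℝ) (hL : 0 < L)
    (hf : ∀ x' x'', (∀ j, a j ≤ x' j ∧ x' j ≤ b j) →
      (∀ j, a j ≤ x'' j ∧ x'' j ≤ b j) → |f x' - f x''| ≤ L * ‖x' - x''‖)
    (Lhat : ℝ) (hLhat : 2 * L ≤ Lhat) :
    ∀ x, (∀ j, a j ≤ x j ∧ x j ≤ b j) →
      (f a + f b - Lhat * ‖b - a‖) / 2 ≤ f x :=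
  lower_bound_two_L_general N a b hab f L hL hf Lhat hLhat
end

section
/- Let (d_i, F_i) ∈ (0,∞) × ℝ, i ∈ I, be a finite nonempty family representing hyperintervals, let S = {(d_i, F_i) : i ∈ I} ⊆ ℝ², and let t ∈ I. Then t is non-dominated (i.e., there exists L > 0 such that no i ∈ I satisfies F_i − L·d_i < F_t − L·d_t) if and only if (d_t, F_t) does not belong to the set convexHull(S) + {(u, v) ∈ ℝ² : u ≤ 0, v ≥ 0, (u, v) ≠ (0, 0)}. (Theorem 2 of the paper: the non-dominated hyperintervals are exactly those located on the lower-right convex hull of the set of dots representing the hyperintervals.) -/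
/-!
Translate so that `(d t, F t)` is the origin, with dots `w i`. An estimate `L > 0` makes `t`
non-dominated iff every dot lies in the half-plane `L * x ≤ y`. If such `L` exists, the convex
hull lies in that half-plane, which misses the lower-right cone `x ≥ 0, y ≤ 0, (x, y) ≠ 0`.
Conversely, if the hull misses that cone, each dot to the right of the origin has positive slope
and no dot to the left has larger slope than a dot to the right (otherwise the segment between them
crosses the vertical axis below the origin), so any `L > 0` squeezed between the two groups of
slopes works.
-/

open Pointwise Set

/-- Directions in which moving a dot makes it dominate the original one for every `L > 0`. -/
def lowerRightCone : Set (ℝ × ℝ) := {w | 0 ≤ w.1 ∧ w.2 ≤ 0 ∧ w ≠ 0}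

theorem lt_mul_fst_of_mem_lowerRightCone {w : ℝ × ℝ} (hw : w ∈ lowerRightCone) {L : ℝ}
    (hL : 0 < L) : w.2 < L * w.1 := by
  obtain ⟨h1, h2, h0⟩ := hw
  rcases h1.lt_or_eq with h1 | h1
  · nlinarith
  · have hw₂ : w.2 ≠ 0 := fun h2' => h0 (Prod.ext h1.symm h2')
    rw [← h1, mul_zero]
    exact h2.lt_of_ne hw₂

theorem convexHull_subset_setOf_mul_fst_le {ι : Type*} {w : ι → ℝ × ℝ} {L : ℝ}
    (h : ∀ i, L * (w i).1 ≤ (w i).2) : convexHull ℝ (range w) ⊆ {q | L * q.1 ≤ q.2} := by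
  refine convexHull_min (range_subset_iff.2 h) ?_
  simpa only [sub_nonneg] using
    convex_halfSpace_ge (f := fun q : ℝ × ℝ => q.2 - L * q.1)
      ⟨fun x y => by simp only [Prod.fst_add, Prod.snd_add]; ring,
        fun c x => by simp only [Prod.smul_fst, Prod.smul_snd, smul_eq_mul]; ring⟩ 0

theorem Set.Finite.exists_pos_between {s t : Set ℝ} (hs : s.Finite) (ht : t.Finite)
    (hst : ∀ x ∈ s, ∀ y ∈ t, x ≤ y) (ht₀ : ∀ y ∈ t, 0 < y) :
    ∃ L > 0, (∀ x ∈ s, x ≤ L) ∧ ∀ y ∈ t, L ≤ y := by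
  rcases t.eq_empty_or_nonempty with rfl | hne
  · obtain ⟨M, hM⟩ := hs.bddAbove
    exact ⟨max M 1, by positivity, fun x hx => (hM hx).trans (le_max_left _ _), by simp⟩
  · obtain ⟨y₀, hy₀, hmin⟩ := t.exists_min_image id ht hne
    exact ⟨y₀, ht₀ y₀ hy₀, fun x hx => hst x hx y₀ hy₀, hmin⟩

theorem exists_mem_segment_mem_lowerRightCone {x y : ℝ × ℝ} (hx : 0 < x.1) (hy : y.1 < 0)
    (hxy : x.1 * y.2 < y.1 * x.2) : ∃ q ∈ segment ℝ x y, q ∈ lowerRightCone := by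
  have hs : 0 < x.1 - y.1 := by linarith
  refine ⟨(-y.1 / (x.1 - y.1)) • x + (x.1 / (x.1 - y.1)) • y,
    ⟨_, _, div_nonneg (by linarith) hs.le, div_nonneg hx.le hs.le, ?_, rfl⟩, ?_⟩
  · field_simp; ring
  · have h1 : ((-y.1 / (x.1 - y.1)) • x + (x.1 / (x.1 - y.1)) • y).1 = 0 := by
      simp only [Prod.fst_add, Prod.smul_fst, smul_eq_mul]; field_simp; ring
    have h2 : ((-y.1 / (x.1 - y.1)) • x + (x.1 / (x.1 - y.1)) • y).2 < 0 := by
      simp only [Prod.snd_add, Prod.smul_snd, smul_eq_mul]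
      rw [div_mul_eq_mul_div, div_mul_eq_mul_div, ← add_div]
      exact div_neg_of_neg_of_pos (by linarith) hs
    exact ⟨h1.ge, h2.le, fun h => by rw [h] at h2; exact lt_irrefl _ h2⟩

theorem exists_pos_forall_mul_fst_le {ι : Type*} [Finite ι] {w : ι → ℝ × ℝ}
    (hpos : ∀ i, 0 < (w i).1 → 0 < (w i).2) (hzero : ∀ i, (w i).1 = 0 → 0 ≤ (w i).2)
    (hslope : ∀ i j, 0 < (w i).1 → (w j).1 < 0 → (w j).2 / (w j).1 ≤ (w i).2 / (w i).1) :
    ∃ L > 0, ∀ i, L * (w i).1 ≤ (w i).2 := by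
  set slope : ι → ℝ := fun i => (w i).2 / (w i).1
  obtain ⟨L, hL, hN, hP⟩ := Set.Finite.exists_pos_between
    (Set.toFinite (slope '' {j | (w j).1 < 0})) (Set.toFinite (slope '' {i | 0 < (w i).1}))
    (by rintro _ ⟨j, hj, rfl⟩ _ ⟨i, hi, rfl⟩; exact hslope i j hi hj)
    (by rintro _ ⟨i, hi, rfl⟩; exact div_pos (hpos i hi) hi)
  refine ⟨L, hL, fun i => ?_⟩
  rcases lt_trichotomy (w i).1 0 with h | h | h
  · exact (div_le_iff_of_neg h).1 (hN _ ⟨i, h, rfl⟩)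
  · rw [h, mul_zero]; exact hzero i h
  · exact (le_div_iff₀ h).1 (hP _ ⟨i, h, rfl⟩)

theorem exists_pos_forall_mul_fst_le_iff_disjoint {ι : Type*} [Finite ι] (w : ι → ℝ × ℝ) :
    (∃ L > 0, ∀ i, L * (w i).1 ≤ (w i).2) ↔
      Disjoint (convexHull ℝ (range w)) lowerRightCone := by
  refine ⟨fun ⟨L, hL, h⟩ => Set.disjoint_left.2 fun q hq hcone => ?_, fun hdisj => ?_⟩
  · exact (lt_mul_fst_of_mem_lowerRightCone hcone hL).not_ge
      (convexHull_subset_setOf_mul_fst_le h hq)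
  have hhull : ∀ q ∈ convexHull ℝ (range w), q ∉ lowerRightCone := Set.disjoint_left.1 hdisj
  have hw : ∀ i, w i ∉ lowerRightCone := fun i => hhull _ (subset_convexHull ℝ _ ⟨i, rfl⟩)
  refine exists_pos_forall_mul_fst_le (fun i h1 => ?_) (fun i h1 => ?_) (fun i j hi hj => ?_)
  · by_contra h2
    exact hw i ⟨h1.le, not_lt.1 h2, fun h => by simp [h] at h1⟩
  · by_contra h2
    exact hw i ⟨h1.ge, (not_le.1 h2).le, fun h => by simp [h] at h2⟩
  · by_contra h
    have hcross : (w i).1 * (w j).2 < (w j).1 * (w i).2 := by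
      have hi' := div_mul_cancel₀ (w i).2 hi.ne'
      have hj' := div_mul_cancel₀ (w j).2 hj.ne
      nlinarith [not_le.1 h, mul_neg_of_pos_of_neg hi hj]
    obtain ⟨q, hq, hcone⟩ := exists_mem_segment_mem_lowerRightCone hi hj hcross
    exact hhull q (segment_subset_convexHull (mem_range_self i) (mem_range_self j) hq) hcone

theorem mem_add_iff_not_disjoint_neg_vadd {A : Set (ℝ × ℝ)} {p : ℝ × ℝ} :
    p ∈ A + {c : ℝ × ℝ | c.1 ≤ 0 ∧ 0 ≤ c.2 ∧ c ≠ 0} ↔ ¬Disjoint (-p +ᵥ A) lowerRightCone := by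
  rw [Set.not_disjoint_iff, Set.mem_add]
  constructor
  · rintro ⟨q, hq, c, ⟨h1, h2, h0⟩, rfl⟩
    exact ⟨-c, ⟨q, hq, by simp [vadd_eq_add]⟩, by simpa using h1, by simpa using h2,
      neg_ne_zero.2 h0⟩
  · rintro ⟨_, ⟨q, hq, rfl⟩, h1, h2, h0⟩
    refine ⟨q, hq, -(-p +ᵥ q), ⟨by simpa using h1, by simpa using h2, neg_ne_zero.2 h0⟩, ?_⟩
    simp [vadd_eq_add]

theorem nondominated_iff_lower_right_convex_hull_general (I : Type*) [Fintype I]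
    (d F : I → ℝ) (t : I) :
    (∃ L > (0 : ℝ), ∀ i, ¬(F i - L * d i < F t - L * d t)) ↔
      (d t, F t) ∉ convexHull ℝ (Set.range fun i => (d i, F i)) +
        {p : ℝ × ℝ | p.1 ≤ 0 ∧ 0 ≤ p.2 ∧ p ≠ 0} := by
  have hrange : range (fun i => (d i - d t, F i - F t)) =
      -(d t, F t) +ᵥ range fun i => (d i, F i) := by
    rw [Set.vadd_set_range]
    congr 1; ext i <;> simp [vadd_eq_add, sub_eq_neg_add]
  rw [mem_add_iff_not_disjoint_neg_vadd, not_not, ← convexHull_vadd, ← hrange,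
    ← exists_pos_forall_mul_fst_le_iff_disjoint]
  refine exists_congr fun L => and_congr_right' (forall_congr' fun i => ?_)
  rw [not_lt]
  constructor <;> intro <;> linarith

/-- Theorem 2 of the paper: a hyperinterval `t` is non-dominated (i.e., it
has the smallest lower bound `R_t(L) = F_t - L·d_t` for some estimate
`L > 0` of the Lipschitz constant) if and only if the dot `(d_t, F_t)` lies
on the lower-right convex hull of the set of dots representing the
hyperintervals, i.e., `(d_t, F_t)` does not belong to the Minkowski sum of
the convex hull of the dots with the cone `{(u,v) : u ≤ 0, v ≥ 0, (u,v) ≠ 0}`. -/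
theorem nondominated_iff_lower_right_convex_hull (I : Type*) [Fintype I]
    [Nonempty I] (d F : I → ℝ) (hd : ∀ i, 0 < d i) (t : I) :
    (∃ L > (0 : ℝ), ∀ i, ¬(F i - L * d i < F t - L * d t)) ↔
      (d t, F t) ∉ convexHull ℝ (Set.range fun i => (d i, F i)) +
        {p : ℝ × ℝ | p.1 ≤ 0 ∧ 0 ≤ p.2 ∧ p ≠ 0} :=
  nondominated_iff_lower_right_convex_hull_general I d F t
end

section
/- Let N ≥ 1, let a, b ∈ ℝ^N with a(j) ≤ b(j) for all j and a ≠ b, and let i be a coordinate on which the side length is maximal: b(i) − a(i) = max_j (b(j) − a(j)) = Δ. If [a,b] is trisected along coordinate i, then the common diagonal length d' of the three resulting boxes satisfies d'² = ‖b − a‖² − (8/9)Δ² ≤ (1 − 8/(9N))·‖b − a‖². (Trisecting a longest side contracts the diagonal by a factor bounded away from 1, depending only on the dimension; this drives the diagonals of successive groups to zero.) -/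
/-!
Only the `i`-th side changes, from `Δ` to `Δ / 3`, so the squared diagonal drops by
`Δ² - (Δ/3)² = (8/9) Δ²`. Since `Δ` is the longest side, `‖b - a‖² ≤ N Δ²`, so this drop is
at least `8 / (9N)` of the squared diagonal.
-/

namespace EuclideanSpace

variable {ι : Type*} [Fintype ι]

theorem real_norm_sq_eq_of_eq_off {x y : EuclideanSpace ℝ ι} (i : ι)
    (h : ∀ j, j ≠ i → x j = y j) :
    ‖x‖ ^ 2 = ‖y‖ ^ 2 - y i ^ 2 + x i ^ 2 := by
  classical
  have hrest : ∑ j ∈ Finset.univ.erase i, x j ^ 2 = ∑ j ∈ Finset.univ.erase i, y j ^ 2 :=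
    Finset.sum_congr rfl fun j hj => by rw [h j (Finset.ne_of_mem_erase hj)]
  rw [real_norm_sq_eq, real_norm_sq_eq, ← Finset.add_sum_erase _ _ (Finset.mem_univ i),
    ← Finset.add_sum_erase _ _ (Finset.mem_univ i), hrest]
  ring

theorem real_norm_sq_le_card_mul_sq {x : EuclideanSpace ℝ ι} {c : ℝ} (h : ∀ j, |x j| ≤ c) :
    ‖x‖ ^ 2 ≤ Fintype.card ι * c ^ 2 := by
  rw [real_norm_sq_eq]
  calc ∑ j, x j ^ 2 ≤ ∑ _j : ι, c ^ 2 :=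
        Finset.sum_le_sum fun j _ => sq_le_sq' (abs_le.mp (h j)).1 (abs_le.mp (h j)).2
    _ = Fintype.card ι * c ^ 2 := by simp

end EuclideanSpace

theorem trisection_diagonal_contraction_general (N : ℕ)
    (a b : EuclideanSpace ℝ (Fin N)) (hab : ∀ j, a j ≤ b j)
    (i : Fin N) (hi : ∀ j, b j - a j ≤ b i - a i)
    (b1 : EuclideanSpace ℝ (Fin N))
    (hb1i : b1 i = a i + (b i - a i) / 3) (hb1 : ∀ j, j ≠ i → b1 j = b j) :
    ‖b1 - a‖ ^ 2 = ‖b - a‖ ^ 2 - (8 / 9) * (b i - a i) ^ 2 ∧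
      ‖b1 - a‖ ^ 2 ≤ (1 - 8 / (9 * (N : ℝ))) * ‖b - a‖ ^ 2 := by
  have hdiag : ‖b1 - a‖ ^ 2 = ‖b - a‖ ^ 2 - (8 / 9) * (b i - a i) ^ 2 := by
    rw [EuclideanSpace.real_norm_sq_eq_of_eq_off (y := b - a) i fun j hj => by simp [hb1 j hj]]
    simp only [PiLp.sub_apply, hb1i]
    ring
  have hlongest : ‖b - a‖ ^ 2 ≤ N * (b i - a i) ^ 2 := by
    simpa using EuclideanSpace.real_norm_sq_le_card_mul_sq (x := b - a) fun j => by
      simpa [abs_of_nonneg (sub_nonneg.mpr (hab j))] using hi j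
  have hNpos : (0 : ℝ) < N := by exact_mod_cast i.pos
  have hmean : ‖b - a‖ ^ 2 / N ≤ (b i - a i) ^ 2 := by
    rwa [div_le_iff₀ hNpos, mul_comm]
  refine ⟨hdiag, ?_⟩
  calc ‖b1 - a‖ ^ 2 = ‖b - a‖ ^ 2 - (8 / 9) * (b i - a i) ^ 2 := hdiag
    _ ≤ ‖b - a‖ ^ 2 - (8 / 9) * (‖b - a‖ ^ 2 / N) := by gcongr
    _ = (1 - 8 / (9 * (N : ℝ))) * ‖b - a‖ ^ 2 := by field_simp

/-- Trisecting a longest side contracts the diagonal by a factor bounded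
away from 1, depending only on the dimension: if `b i - a i = max_j (b j - a j)`
and `[a, b]` is trisected along coordinate `i`, then the common diagonal
length `d'` of the three children (here expressed via the child `[a, b₁]`)
satisfies `d'² = ‖b - a‖² - (8/9)Δ² ≤ (1 - 8/(9N))·‖b - a‖²`. -/
theorem trisection_diagonal_contraction (N : ℕ) (hN : 1 ≤ N)
    (a b : EuclideanSpace ℝ (Fin N)) (hab : ∀ j, a j ≤ b j) (hne : a ≠ b)
    (i : Fin N) (hi : ∀ j, b j - a j ≤ b i - a i)
    (b1 : EuclideanSpace ℝ (Fin N))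
    (hb1i : b1 i = a i + (b i - a i) / 3) (hb1 : ∀ j, j ≠ i → b1 j = b j) :
    ‖b1 - a‖ ^ 2 = ‖b - a‖ ^ 2 - (8 / 9) * (b i - a i) ^ 2 ∧
      ‖b1 - a‖ ^ 2 ≤ (1 - 8 / (9 * (N : ℝ))) * ‖b - a‖ ^ 2 :=
  trisection_diagonal_contraction_general N a b hab i hi b1 hb1i hb1
end
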